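/- Let N ≥ 1, Δt > 0, and let a, b ∈ ℂ^N (extended by a_0 = a_{N+1} = b_0 = b_{N+1} = 0) satisfy the modified midpoint mass-preserving scheme: for each j = 1,…,N, b_j = a_j + Δt·( −i·((|a_j|² + |b_j|²)/2)·m_j + 2i \bar{m_j}( m_{j+1}² + m_{j−1}² ) ), where m_j = (a_j + b_j)/2. Then mass is exactly conserved: Σ_{j=1}^N |b_j|² = Σ_{j=1}^N |a_j|². -/
import Mathlib

private lemma shift_aux (N : ℕ) (g : ℕ → ℂ) (h0 : g 0 = 0) (hN : g N = 0) :
    ∑ i ∈ Finset.range N, g i = ∑ i ∈ Finset.range N, g (i + 1) := by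
  have h1 := Finset.sum_range_succ g N
  have h2 := Finset.sum_range_succ' g N
  rw [hN, add_zero] at h1
  rw [h0, add_zero] at h2
  rw [← h1, h2]

private lemma icc_to_range (N : ℕ) (g : ℕ → ℂ) :
    ∑ j ∈ Finset.Icc 1 N, g j = ∑ i ∈ Finset.range N, g (i + 1) := by
  rw [← Finset.Ico_add_one_right_eq_Icc, Finset.sum_Ico_eq_sum_range]
  simp [Nat.add_comm]

/-- The modified midpoint (mass-preserving) scheme for the toy
model system, with Dirichlet conventions, exactly conserves the mass. -/
theorem modified_midpoint_mass_conservation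
    (N : ℕ) (hN : 1 ≤ N) (Δt : ℝ) (hΔt : 0 < Δt)
    (a b m : ℕ → ℂ)
    (ha0 : a 0 = 0) (haN : a (N + 1) = 0)
    (hb0 : b 0 = 0) (hbN : b (N + 1) = 0)
    (hm : ∀ j, m j = (a j + b j) / 2)
    (hscheme : ∀ j ∈ Finset.Icc 1 N,
      b j = a j + (Δt : ℂ) *
        (-Complex.I * ((((Complex.normSq (a j) + Complex.normSq (b j)) / 2 : ℝ) : ℂ)) * m j
          + 2 * Complex.I * (starRingEnd ℂ) (m j) * ((m (j + 1)) ^ 2 + (m (j - 1)) ^ 2))) :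
    ∑ j ∈ Finset.Icc 1 N, Complex.normSq (b j)
      = ∑ j ∈ Finset.Icc 1 N, Complex.normSq (a j) := by
  have hm0 : m 0 = 0 := by rw [hm 0, ha0, hb0]; simp
  have hmN : m (N + 1) = 0 := by rw [hm (N + 1), haN, hbN]; simp
  set c : ℕ → ℂ := fun j => (m j) ^ 2 with hc
  have hc0 : c 0 = 0 := by simp [hc, hm0]
  have hcN : c (N + 1) = 0 := by simp [hc, hmN]
  set S : ℂ := ∑ j ∈ Finset.Icc 1 N, (starRingEnd ℂ) (c j) * (c (j + 1) + c (j - 1)) with hS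
  -- S is real
  have e1 : ∑ j ∈ Finset.Icc 1 N, (starRingEnd ℂ) (c j) * c (j + 1)
      = ∑ j ∈ Finset.Icc 1 N, c j * (starRingEnd ℂ) (c (j - 1)) := by
    rw [icc_to_range, icc_to_range]
    have h := shift_aux N (fun i => (starRingEnd ℂ) (c i) * c (i + 1)) (by simp [hc0]) (by simp [hcN])
    calc ∑ i ∈ Finset.range N, (starRingEnd ℂ) (c (i + 1)) * c (i + 1 + 1)
        = ∑ i ∈ Finset.range N, (starRingEnd ℂ) (c i) * c (i + 1) := h.symm
      _ = ∑ i ∈ Finset.range N, c (i + 1) * (starRingEnd ℂ) (c (i + 1 - 1)) := by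
          refine Finset.sum_congr rfl fun i _ => ?_
          rw [Nat.add_sub_cancel, mul_comm]
  have e2 : ∑ j ∈ Finset.Icc 1 N, (starRingEnd ℂ) (c j) * c (j - 1)
      = ∑ j ∈ Finset.Icc 1 N, c j * (starRingEnd ℂ) (c (j + 1)) := by
    rw [icc_to_range, icc_to_range]
    have h := shift_aux N (fun i => (starRingEnd ℂ) (c (i + 1)) * c i) (by simp [hc0]) (by simp [hcN])
    calc ∑ i ∈ Finset.range N, (starRingEnd ℂ) (c (i + 1)) * c (i + 1 - 1)
        = ∑ i ∈ Finset.range N, (starRingEnd ℂ) (c (i + 1)) * c i := by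
          refine Finset.sum_congr rfl fun i _ => ?_
          rw [Nat.add_sub_cancel]
      _ = ∑ i ∈ Finset.range N, (starRingEnd ℂ) (c (i + 1 + 1)) * c (i + 1) := h
      _ = ∑ i ∈ Finset.range N, c (i + 1) * (starRingEnd ℂ) (c (i + 1 + 1)) := by
          refine Finset.sum_congr rfl fun i _ => ?_
          rw [mul_comm]
  have hSconj : (starRingEnd ℂ) S = S := by
    rw [hS, map_sum]
    have : ∀ j ∈ Finset.Icc 1 N,
        (starRingEnd ℂ) ((starRingEnd ℂ) (c j) * (c (j + 1) + c (j - 1)))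
          = c j * (starRingEnd ℂ) (c (j + 1)) + c j * (starRingEnd ℂ) (c (j - 1)) := by
      intro j _
      simp [map_mul, map_add, mul_add]
    rw [Finset.sum_congr rfl this, Finset.sum_add_distrib, ← e1, ← e2]
    have : ∀ j ∈ Finset.Icc 1 N,
        (starRingEnd ℂ) (c j) * (c (j + 1) + c (j - 1))
          = (starRingEnd ℂ) (c j) * c (j + 1) + (starRingEnd ℂ) (c j) * c (j - 1) := by
      intro j _; ring
    rw [Finset.sum_congr rfl this, Finset.sum_add_distrib]
    ring
  have hSim : S.im = 0 := Complex.conj_eq_iff_im.mp hSconj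
  -- per-term identity for the mass difference
  have keybase : ∀ z w : ℂ, Complex.normSq w - Complex.normSq z
      = ((w - z) * (starRingEnd ℂ) (z + w)).re := by
    intro z w
    simp [Complex.normSq_apply, Complex.mul_re, Complex.sub_re, Complex.sub_im,
      Complex.add_re, Complex.add_im]
    ring
  have main : ∀ j ∈ Finset.Icc 1 N,
      (b j - a j) * (starRingEnd ℂ) (a j + b j)
        = (Δt : ℂ) * 2 * (-Complex.I *
            ((((Complex.normSq (a j) + Complex.normSq (b j)) / 2 : ℝ) : ℂ)
              * ((Complex.normSq (m j) : ℝ) : ℂ))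
            + 2 * Complex.I * ((starRingEnd ℂ) (c j) * (c (j + 1) + c (j - 1)))) := by
    intro j hj
    have hb := hscheme j hj
    have hab : a j + b j = 2 * m j := by rw [hm j]; ring
    have hmc : m j * (starRingEnd ℂ) (m j) = ((Complex.normSq (m j) : ℝ) : ℂ) :=
      Complex.mul_conj (m j)
    set q : ℝ := (Complex.normSq (a j) + Complex.normSq (b j)) / 2 with hq
    rw [hab, map_mul, map_ofNat]
    simp only [hc, map_pow]
    linear_combination (2 * (starRingEnd ℂ) (m j)) * hb
      + ((Δt : ℂ) * 2 * (-Complex.I * (q : ℂ))) * hmc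
  -- assemble
  rw [← sub_eq_zero, ← Finset.sum_sub_distrib]
  have step1 : ∀ j ∈ Finset.Icc 1 N,
      Complex.normSq (b j) - Complex.normSq (a j)
        = ((b j - a j) * (starRingEnd ℂ) (a j + b j)).re :=
    fun j _ => keybase (a j) (b j)
  rw [Finset.sum_congr rfl step1, ← Complex.re_sum, Finset.sum_congr rfl main,
    ← Finset.mul_sum, Finset.sum_add_distrib, ← Finset.mul_sum, ← Finset.mul_sum, ← hS]
  set A : ℂ := ∑ j ∈ Finset.Icc 1 N,
    ((((Complex.normSq (a j) + Complex.normSq (b j)) / 2 : ℝ) : ℂ)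
      * ((Complex.normSq (m j) : ℝ) : ℂ)) with hA
  have hAim : A.im = 0 := by
    rw [hA, Complex.im_sum]
    refine Finset.sum_eq_zero fun j _ => ?_
    simp [Complex.mul_im]
  simp [Complex.mul_re, Complex.mul_im, Complex.add_re, Complex.add_im,
    Complex.I_re, Complex.I_im, Complex.ofReal_re, Complex.ofReal_im, hSim, hAim]
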